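/- arXiv:1708.03823 — 8 statements merged into one kernel-verified Lean document; each statement's English description precedes it below -/
import Mathlib

section
/- Let A, B, E be Banach spaces, let u : A → B be a linear isometric embedding and let t : A → E be a bounded linear operator. Then there exist a Banach space P, a linear isometric embedding u' : E → P and a bounded linear operator t' : B → P such that ‖t'‖ ≤ ‖t‖ and t' ∘ u = u' ∘ t. -/
/-- A bundled Banach space over `ℝ`. -/
structure BanachSpace : Type (u + 1) where
  carrier : Type u
  [norm : NormedAddCommGroup carrier]
  [space : NormedSpace ℝ carrier]
  [complete : CompleteSpace carrier]

attribute [instance] BanachSpace.norm BanachSpace.space BanachSpace.complete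

instance : CoeSort BanachSpace.{u} (Type u) := ⟨BanachSpace.carrier⟩

/-!
The push-out is the quotient of the ℓ¹-sum `E ⊕₁ B` by the closure of `{(t a, -u a)}`.
Whenever `‖t a‖ ≤ ‖u a‖`, the ℓ¹ norm makes `E` embed isometrically, because
`‖e‖ ≤ ‖e - t a‖ + ‖u a‖ = ‖(e, 0) - (t a, -u a)‖`, while `B` maps in with norm at most `1`.
A general `t` reduces to this case by replacing `u` with `‖t‖ • u` and rescaling the map out of `B`.
-/

open Metric

theorem Submodule.Quotient.norm_mk_eq_infDist {R M : Type*} [Ring R] [SeminormedAddCommGroup M]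
    [Module R M] (S : Submodule R M) (x : M) :
    ‖(Submodule.Quotient.mk x : M ⧸ S)‖ = infDist x S :=
  QuotientAddGroup.norm_mk x

section

variable {𝕜 A B E : Type*} [NormedField 𝕜] [AddCommGroup A] [Module 𝕜 A]
  [SeminormedAddCommGroup B] [NormedSpace 𝕜 B] [SeminormedAddCommGroup E] [NormedSpace 𝕜 E]

def pushoutGraph (u : A →ₗ[𝕜] B) (t : A →ₗ[𝕜] E) : A →ₗ[𝕜] WithLp 1 (E × B) :=
  (WithLp.linearEquiv 1 𝕜 (E × B)).symm.toLinearMap ∘ₗ t.prod (-u)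

theorem pushoutGraph_apply (u : A →ₗ[𝕜] B) (t : A →ₗ[𝕜] E) (a : A) :
    pushoutGraph u t a = WithLp.toLp 1 (t a, -u a) :=
  rfl

def pushoutSubmodule (u : A →ₗ[𝕜] B) (t : A →ₗ[𝕜] E) : Submodule 𝕜 (WithLp 1 (E × B)) :=
  (LinearMap.range (pushoutGraph u t)).topologicalClosure

instance isClosed_pushoutSubmodule (u : A →ₗ[𝕜] B) (t : A →ₗ[𝕜] E) :
    IsClosed (pushoutSubmodule u t : Set (WithLp 1 (E × B))) :=
  Submodule.isClosed_topologicalClosure _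

abbrev NormedPushout (u : A →ₗ[𝕜] B) (t : A →ₗ[𝕜] E) : Type _ :=
  WithLp 1 (E × B) ⧸ pushoutSubmodule u t

namespace NormedPushout

variable (u : A →ₗ[𝕜] B) (t : A →ₗ[𝕜] E)

def inl : E →ₗ[𝕜] NormedPushout u t :=
  (pushoutSubmodule u t).mkQ ∘ₗ (WithLp.linearEquiv 1 𝕜 (E × B)).symm.toLinearMap ∘ₗ
    LinearMap.inl 𝕜 E B

def inr : B →ₗ[𝕜] NormedPushout u t :=
  (pushoutSubmodule u t).mkQ ∘ₗ (WithLp.linearEquiv 1 𝕜 (E × B)).symm.toLinearMap ∘ₗ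
    LinearMap.inr 𝕜 E B

theorem inl_apply (e : E) : inl u t e = Submodule.Quotient.mk (WithLp.toLp 1 (e, 0)) :=
  rfl

theorem inr_apply (b : B) : inr u t b = Submodule.Quotient.mk (WithLp.toLp 1 (0, b)) :=
  rfl

theorem inr_apply_map (a : A) : inr u t (u a) = inl u t (t a) := by
  have hdiff : WithLp.toLp 1 ((0 : E), u a) - WithLp.toLp 1 (t a, 0) = -pushoutGraph u t a := by
    simp [pushoutGraph_apply, ← WithLp.toLp_sub, ← WithLp.toLp_neg]
  rw [inl_apply, inr_apply, Submodule.Quotient.eq, hdiff]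
  exact neg_mem (Submodule.le_topologicalClosure _ (LinearMap.mem_range_self _ a))

theorem norm_inr_le (b : B) : ‖inr u t b‖ ≤ ‖b‖ :=
  (Submodule.Quotient.norm_mk_le _ _).trans_eq (by simp)

variable {u t}

theorem norm_inl (h : ∀ a, ‖t a‖ ≤ ‖u a‖) (e : E) : ‖inl u t e‖ = ‖e‖ := by
  refine le_antisymm ((Submodule.Quotient.norm_mk_le _ _).trans_eq (by simp)) ?_
  rw [inl_apply, Submodule.Quotient.norm_mk_eq_infDist, pushoutSubmodule,
    Submodule.topologicalClosure_coe, infDist_closure, le_infDist ⟨0, Submodule.zero_mem _⟩]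
  rintro _ ⟨a, rfl⟩
  calc ‖e‖ ≤ ‖e - t a‖ + ‖t a‖ := norm_le_norm_sub_add e (t a)
    _ ≤ ‖e - t a‖ + ‖u a‖ := by gcongr; exact h a
    _ = dist (WithLp.toLp 1 (e, 0)) (pushoutGraph u t a) := by
      simp [pushoutGraph_apply, dist_eq_norm, ← WithLp.toLp_sub, WithLp.prod_norm_eq_of_L1]

def inlₗᵢ (h : ∀ a, ‖t a‖ ≤ ‖u a‖) : E →ₗᵢ[𝕜] NormedPushout u t :=
  ⟨inl u t, norm_inl h⟩

end NormedPushout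

end

/-- The push-out construction: given a linear isometric embedding `u : A → B` and a bounded
linear operator `t : A → E` between Banach spaces, there are a Banach space `P`, a linear
isometric embedding `u' : E → P` and a bounded linear operator `t' : B → P` with
`‖t'‖ ≤ ‖t‖` and `t' ∘ u = u' ∘ t`. -/
theorem pushout_construction (A B E : BanachSpace.{u})
    (u : A →ₗᵢ[ℝ] B) (t : A.carrier →L[ℝ] E.carrier) :
    ∃ (P : BanachSpace.{u}) (u' : E.carrier →ₗᵢ[ℝ] P.carrier)
      (t' : B.carrier →L[ℝ] P.carrier),
      ‖t'‖ ≤ ‖t‖ ∧ ∀ a : A.carrier, t' (u a) = u' (t a) := by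
  let s : A.carrier →ₗ[ℝ] B.carrier := ‖t‖ • u.toLinearMap
  let r : A.carrier →ₗ[ℝ] E.carrier := t
  have hrs (a : A.carrier) : ‖r a‖ ≤ ‖s a‖ := by
    simpa [r, s, norm_smul, u.norm_map] using t.le_opNorm a
  have hbound (b : B.carrier) : ‖(‖t‖ • NormedPushout.inr s r) b‖ ≤ ‖t‖ * ‖b‖ := by
    rw [LinearMap.smul_apply, norm_smul, norm_norm]
    exact mul_le_mul_of_nonneg_left (NormedPushout.norm_inr_le s r b) (norm_nonneg t)
  refine ⟨⟨NormedPushout s r⟩, NormedPushout.inlₗᵢ hrs,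
    (‖t‖ • NormedPushout.inr s r).mkContinuous ‖t‖ hbound,
    LinearMap.mkContinuous_norm_le _ (norm_nonneg t) hbound, fun a ↦ ?_⟩
  calc (‖t‖ • NormedPushout.inr s r) (u a) = NormedPushout.inr s r (s a) := by simp [s]
    _ = NormedPushout.inl s r (r a) := NormedPushout.inr_apply_map s r a
end

section
/- Let A, B, E be Banach spaces, let u : A → B be a linear isometric embedding and let t : A → E be a linear isometric embedding. Then there exist a Banach space P, a linear isometric embedding u' : E → P and a linear isometric embedding t' : B → P such that t' ∘ u = u' ∘ t. -/
lemma WithLp.prod_norm_one {α β : Type*} [NormedAddCommGroup α] [NormedAddCommGroup β]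
    (f : WithLp 1 (α × β)) : ‖f‖ = ‖f.fst‖ + ‖f.snd‖ := by
  rw [WithLp.prod_norm_eq_add (by norm_num)]
  norm_num

/-- The push-out construction for two isometries: given linear isometric embeddings
`u : A → B` and `t : A → E` between Banach spaces, there are a Banach space `P` and linear
isometric embeddings `u' : E → P` and `t' : B → P` with `t' ∘ u = u' ∘ t`. -/
theorem pushout_isometries (A B E : BanachSpace.{u})
    (u : A →ₗᵢ[ℝ] B) (t : A.carrier →ₗᵢ[ℝ] E.carrier) :
    ∃ (P : BanachSpace.{u}) (u' : E.carrier →ₗᵢ[ℝ] P.carrier)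
      (t' : B.carrier →ₗᵢ[ℝ] P.carrier),
      ∀ a : A.carrier, t' (u a) = u' (t a) := by
  classical
  set V := WithLp 1 (B.carrier × E.carrier) with hV
  let ι : (B.carrier × E.carrier) →ₗ[ℝ] V :=
    (WithLp.linearEquiv 1 ℝ (B.carrier × E.carrier)).symm.toLinearMap
  let j : A.carrier →ₗ[ℝ] V := ι ∘ₗ (u.toLinearMap.prod (-t.toLinearMap))
  set S : Submodule ℝ V := (LinearMap.range j).topologicalClosure with hS
  haveI hSclosed : IsClosed (S : Set V) := (LinearMap.range j).isClosed_topologicalClosure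
  -- key lower bound lemma
  have key : ∀ (v : V) (c : ℝ), (∀ s ∈ S, c ≤ ‖v + s‖) →
      c ≤ ‖Submodule.Quotient.mk (p := S) v‖ := by
    intro v c hv
    by_contra h
    push_neg at h
    obtain ⟨m, hm, hmlt⟩ := Submodule.Quotient.norm_mk_lt (S := S)
      (Submodule.Quotient.mk (p := S) v) (show (0:ℝ) < c - ‖Submodule.Quotient.mk (p := S) v‖
        from sub_pos.mpr h)
    have hmem : m - v ∈ S := (Submodule.Quotient.eq S).mp hm
    have := hv (m - v) hmem
    rw [add_sub_cancel] at this
    linarith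
  have hrange : ∀ x, x ∈ LinearMap.range j → x ∈ S :=
    fun x hx => (LinearMap.range j).le_topologicalClosure hx
  -- lower bound on the B side
  have hB : ∀ (b : B.carrier) (s : V), s ∈ S → ‖b‖ ≤ ‖ι (b, 0) + s‖ := by
    intro b s hs
    have hclosed : IsClosed {s : V | ‖b‖ ≤ ‖ι (b, 0) + s‖} :=
      isClosed_le continuous_const ((continuous_const.add continuous_id).norm)
    refine hclosed.closure_subset_iff.mpr ?_ hs
    rintro x ⟨a, rfl⟩
    show ‖b‖ ≤ ‖ι (b, 0) + j a‖
    have h1 : ι (b, 0) + j a = ι (b + u a, -(t a)) := by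
      show ι ((b, 0) + (u a, -(t a))) = _
      congr 1
      simp
    rw [h1]
    have hnorm : ‖(ι (b + u a, -(t a)) : V)‖ = ‖b + u a‖ + ‖t a‖ := by
      rw [WithLp.prod_norm_one]; simp [ι]
    rw [hnorm]
    calc ‖b‖ = ‖(b + u a) - u a‖ := by congr 1; abel
      _ ≤ ‖b + u a‖ + ‖u a‖ := norm_sub_le _ _
      _ = ‖b + u a‖ + ‖t a‖ := by rw [u.norm_map, t.norm_map]
  -- lower bound on the E side
  have hE : ∀ (e : E.carrier) (s : V), s ∈ S → ‖e‖ ≤ ‖ι (0, e) + s‖ := by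
    intro e s hs
    have hclosed : IsClosed {s : V | ‖e‖ ≤ ‖ι (0, e) + s‖} :=
      isClosed_le continuous_const ((continuous_const.add continuous_id).norm)
    refine hclosed.closure_subset_iff.mpr ?_ hs
    rintro x ⟨a, rfl⟩
    show ‖e‖ ≤ ‖ι (0, e) + j a‖
    have h1 : ι (0, e) + j a = ι (u a, e - t a) := by
      show ι ((0, e) + (u a, -(t a))) = _
      congr 1
      simp [Prod.ext_iff, sub_eq_add_neg]
    rw [h1]
    have hnorm : ‖(ι (u a, e - t a) : V)‖ = ‖u a‖ + ‖e - t a‖ := by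
      rw [WithLp.prod_norm_one]; simp [ι]
    rw [hnorm]
    calc ‖e‖ = ‖t a + (e - t a)‖ := by congr 1; abel
      _ ≤ ‖t a‖ + ‖e - t a‖ := norm_add_le _ _
      _ = ‖u a‖ + ‖e - t a‖ := by rw [u.norm_map, t.norm_map]
  refine ⟨⟨V ⧸ S⟩, ?_, ?_, ?_⟩
  · -- u' : E → P
    refine ⟨S.mkQ ∘ₗ ι ∘ₗ LinearMap.inr ℝ B.carrier E.carrier, fun e => le_antisymm ?_ ?_⟩
    · calc ‖Submodule.Quotient.mk (p := S) (ι (0, e))‖ ≤ ‖(ι (0, e) : V)‖ :=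
            Submodule.Quotient.norm_mk_le S _
        _ = ‖e‖ := by rw [WithLp.prod_norm_one]; simp [ι]
    · exact key _ _ (hE e)
  · -- t' : B → P
    refine ⟨S.mkQ ∘ₗ ι ∘ₗ LinearMap.inl ℝ B.carrier E.carrier, fun b => le_antisymm ?_ ?_⟩
    · calc ‖Submodule.Quotient.mk (p := S) (ι (b, 0))‖ ≤ ‖(ι (b, 0) : V)‖ :=
            Submodule.Quotient.norm_mk_le S _
        _ = ‖b‖ := by rw [WithLp.prod_norm_one]; simp [ι]
    · exact key _ _ (hB b)
  · intro a
    show Submodule.Quotient.mk (p := S) (ι (u a, 0)) =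
      Submodule.Quotient.mk (p := S) (ι (0, t a))
    rw [Submodule.Quotient.eq]
    have h1 : ι (u a, 0) - ι (0, t a) = j a := by
      show ι ((u a, 0) - (0, t a)) = ι (u a, -(t a))
      congr 1
      simp [Prod.ext_iff, sub_eq_add_neg]
    rw [h1]
    exact hrange _ ⟨a, rfl⟩
end

section
/- The Banach space c of convergent scalar sequences (equivalently, the space C(ℕ∞, ℝ) of continuous real-valued functions on the one-point compactification of ℕ with the supremum norm) is not locally 1-injective: there exist a finite-dimensional Banach space B, a subspace A ⊆ B, and a linear operator t : A → c that admits no linear extension T : B → c with ‖T‖ = ‖t‖. -/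
/-!
Norm `ℝ³` by `‖x‖ = sup_k |ψ_k x|` with `ψ_k x = (1 - s_k²) x₀ + s_k x₁ + (-1)^k x₂` and `s_k = 1/k`,
let `A = {x₂ = 0}` and `t a = (ψ_n a)_n`, a sequence converging to `a₀`, so `‖t‖ ≤ 1`.
On `A` the functionals `ψ_n` lie on a parabola, and `ψ_n` is exposed by `v_n = (1, 2 s_n, 0)`:
`ψ_m v_n = 1 + s_n² - (s_m - s_n)²`. Hence `‖λ v_n ± e₂‖ ≤ λ (1 + s_n²) ± (-1)^n` for large `λ`,
which forces every extension `T` of `t` with `‖T‖ ≤ 1` to satisfy `T e₂ n = (-1)^n` for `n ≥ 1`;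
but `T e₂` is a convergent sequence.
-/

open Filter Topology OnePoint
open scoped BoundedContinuousFunction

theorem eq_of_forall_norm_add_smul_le {E : Type*} [SeminormedAddCommGroup E] [Module ℝ E]
    (φ : E →ₗ[ℝ] ℝ) (hφ : ∀ z, φ z ≤ ‖z‖) {x y : E} {c : ℝ}
    (h : ∀ ε : ℝ, |ε| = 1 → ‖y + ε • x‖ ≤ φ y + ε * c) : φ x = c := by
  have h₁ := (hφ _).trans (h 1 (by simp))
  have h₂ := (hφ _).trans (h (-1) (by simp))
  simp only [one_smul, neg_smul, map_add, map_neg, one_mul, neg_one_mul] at h₁ h₂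
  linarith

theorem not_tendsto_neg_one_pow (L : ℝ) : ¬ Tendsto (fun n : ℕ ↦ (-1 : ℝ) ^ n) atTop (𝓝 L) := by
  intro h
  have h_neg : L = -L := by
    refine tendsto_nhds_unique ((tendsto_add_atTop_iff_nat 1).2 h) ?_
    simpa [pow_succ] using h.neg
  have h_abs : |L| = 1 := tendsto_nhds_unique h.abs (by simp)
  rw [abs_eq_zero.2 (by linarith)] at h_abs
  exact zero_ne_one h_abs

theorem ContinuousMap.not_eventually_eq_neg_one_pow (g : C(OnePoint ℕ, ℝ)) :
    ¬ ∀ᶠ n : ℕ in atTop, g n = (-1) ^ n :=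
  fun h ↦ not_tendsto_neg_one_pow _
    (((continuous_iff_from_nat g).1 g.continuous).congr' h)

namespace SpaceC

noncomputable section

/-- `slope 0 = 0` (Lean's `0⁻¹ = 0`): coordinate `0` of `B` is `x₀ + x₂`, which bounds `t` at `∞`. -/
def slope (k : ℕ) : ℝ := (k : ℝ)⁻¹

lemma slope_nonneg (k : ℕ) : 0 ≤ slope k := inv_nonneg.2 k.cast_nonneg

lemma slope_le_one (k : ℕ) : slope k ≤ 1 := by
  rcases k.eq_zero_or_pos with rfl | hk
  · simp [slope]
  · exact inv_le_one_of_one_le₀ (by exact_mod_cast hk)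

lemma tendsto_slope : Tendsto slope atTop (𝓝 0) := tendsto_inv_atTop_nhds_zero_nat

lemma one_le_mul_abs_slope_sub {m n : ℕ} (hn : 1 ≤ n) (hmn : m ≠ n) :
    1 ≤ n * (n + 1) * |slope m - slope n| := by
  have hn' : (1 : ℝ) ≤ n := by exact_mod_cast hn
  rcases m.eq_zero_or_pos with rfl | hm
  · rw [slope, slope, Nat.cast_zero, inv_zero, zero_sub, abs_neg, abs_of_pos (by positivity),
      mul_assoc, mul_comm, mul_assoc, inv_mul_cancel₀ (by positivity)]
    linarith
  have hm' : (1 : ℝ) ≤ m := by exact_mod_cast hm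
  rw [slope, slope, inv_sub_inv (by positivity) (by positivity), abs_div,
    abs_of_pos (by positivity : (0 : ℝ) < m * n), mul_div_assoc', le_div_iff₀ (by positivity)]
  rcases lt_or_gt_of_ne hmn with h | h
  · have h' : (m : ℝ) + 1 ≤ n := by exact_mod_cast h
    rw [abs_of_pos (by linarith)]
    have : (m : ℝ) ≤ (n + 1) * (n - m) := by nlinarith
    nlinarith
  · have h' : (n : ℝ) + 1 ≤ m := by exact_mod_cast h
    rw [abs_of_neg (by linarith)]
    have : (m : ℝ) ≤ (n + 1) * -(n - m) := by nlinarith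
    nlinarith

def B : Type := Fin 3 → ℝ

instance : AddCommGroup B := inferInstanceAs (AddCommGroup (Fin 3 → ℝ))
instance : Module ℝ B := inferInstanceAs (Module ℝ (Fin 3 → ℝ))

def B.equivFun : B ≃ₗ[ℝ] (Fin 3 → ℝ) := LinearEquiv.refl ℝ _

def coord (k : ℕ) : B →ₗ[ℝ] ℝ :=
  ((1 - slope k ^ 2) • LinearMap.proj 0 + slope k • LinearMap.proj 1 + (-1) ^ k • LinearMap.proj 2)
    ∘ₗ B.equivFun.toLinearMap

lemma coord_apply (k : ℕ) (x : B) : coord k x =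
    (1 - slope k ^ 2) * B.equivFun x 0 + slope k * B.equivFun x 1 + (-1) ^ k * B.equivFun x 2 := by
  simp [coord]

lemma abs_coord_le (k : ℕ) (x : B) :
    |coord k x| ≤ |B.equivFun x 0| + |B.equivFun x 1| + |B.equivFun x 2| := by
  have h₀ : |1 - slope k ^ 2| ≤ 1 := by
    rw [abs_le]; constructor <;> nlinarith [slope_nonneg k, slope_le_one k]
  have h₁ : |slope k| ≤ 1 := by rw [abs_of_nonneg (slope_nonneg k)]; exact slope_le_one k
  rw [coord_apply]
  refine (abs_add_three _ _ _).trans ?_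
  simp only [abs_mul, abs_pow, abs_neg, abs_one, one_pow, one_mul]
  gcongr <;> nlinarith [abs_nonneg (B.equivFun x 0), abs_nonneg (B.equivFun x 1)]

def toBCF : B →ₗ[ℝ] (ℕ →ᵇ ℝ) where
  toFun x := .ofNormedAddCommGroupDiscrete (coord · x) _ (abs_coord_le · x)
  map_add' x y := by ext k; simp
  map_smul' c x := by ext k; simp

lemma toBCF_injective : Function.Injective toBCF := by
  refine (injective_iff_map_eq_zero _).2 fun x hx ↦ B.equivFun.injective ?_
  have h (k : ℕ) : coord k x = 0 := DFunLike.congr_fun hx k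
  have h₀ := h 0
  have h₁ := h 1
  have h₂ := h 2
  norm_num [coord_apply, slope] at h₀ h₁ h₂
  ext i
  fin_cases i <;> simp <;> linarith

instance : NormedAddCommGroup B := .induced B (ℕ →ᵇ ℝ) toBCF toBCF_injective
instance : NormedSpace ℝ B := .induced ℝ B (ℕ →ᵇ ℝ) toBCF
instance : FiniteDimensional ℝ B := .equiv B.equivFun.symm
instance : CompleteSpace B := FiniteDimensional.complete ℝ B

lemma norm_le_iff {x : B} {C : ℝ} (hC : 0 ≤ C) : ‖x‖ ≤ C ↔ ∀ k, |coord k x| ≤ C :=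
  BoundedContinuousFunction.norm_le (f := toBCF x) hC

lemma abs_coord_le_norm (k : ℕ) (x : B) : |coord k x| ≤ ‖x‖ :=
  (norm_le_iff (norm_nonneg x)).1 le_rfl k

def A : Submodule ℝ B := LinearMap.ker (LinearMap.proj 2 ∘ₗ B.equivFun.toLinearMap)

lemma mem_A {x : B} : x ∈ A ↔ B.equivFun x 2 = 0 := Iff.rfl

lemma tendsto_coord_of_mem_A {a : B} (ha : a ∈ A) :
    Tendsto (fun n ↦ coord n a) atTop (𝓝 (B.equivFun a 0)) := by
  simp only [coord_apply, mem_A.1 ha, mul_zero, add_zero]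
  have h := (((tendsto_slope.pow 2).const_sub 1).mul_const (B.equivFun a 0)).add
    (tendsto_slope.mul_const (B.equivFun a 1))
  simpa using h

def tLin : A →ₗ[ℝ] C(OnePoint ℕ, ℝ) where
  toFun a := continuousMapMkNat (fun n ↦ coord n a) (B.equivFun a 0) (tendsto_coord_of_mem_A a.2)
  map_add' a b := by
    ext x
    induction x using OnePoint.rec with
    | infty => exact congr_fun (map_add B.equivFun (a : B) b) 0
    | coe n => exact map_add (coord n) (a : B) b
  map_smul' c a := by
    ext x
    induction x using OnePoint.rec with
    | infty => exact congr_fun (_root_.map_smul B.equivFun c (a : B)) 0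
    | coe n => exact _root_.map_smul (coord n) c (a : B)

lemma norm_tLin_le (a : A) : ‖tLin a‖ ≤ 1 * ‖a‖ := by
  rw [one_mul, ContinuousMap.norm_le _ (norm_nonneg _)]
  intro x
  induction x using OnePoint.rec with
  | infty =>
    have h : coord 0 a = B.equivFun a 0 := by simp [coord_apply, slope, mem_A.1 a.2]
    exact (congrArg abs h).symm.trans_le (abs_coord_le_norm 0 a)
  | coe n => exact abs_coord_le_norm n a

def t : A →L[ℝ] C(OnePoint ℕ, ℝ) := tLin.mkContinuous 1 norm_tLin_le

lemma norm_t_le_one : ‖t‖ ≤ 1 := LinearMap.mkContinuous_norm_le _ zero_le_one _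

lemma t_apply_coe (a : A) (n : ℕ) : t a n = coord n a := rfl

def e₂ : B := B.equivFun.symm ![0, 0, 1]

def lam (n : ℕ) : ℝ := 2 * (n * (n + 1)) ^ 2

def peak (n : ℕ) : B := B.equivFun.symm ![lam n, 2 * lam n * slope n, 0]

lemma peak_mem_A (n : ℕ) : peak n ∈ A := by simp [mem_A, peak]

lemma coord_e₂ (k : ℕ) : coord k e₂ = (-1) ^ k := by simp [coord_apply, e₂]

lemma coord_peak (m n : ℕ) :
    coord m (peak n) = lam n * (1 + slope n ^ 2 - (slope m - slope n) ^ 2) := by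
  simp only [peak, coord_apply, LinearEquiv.apply_symm_apply, Matrix.cons_val_zero,
    Matrix.cons_val_one, Matrix.cons_val, mul_zero, add_zero]
  ring

lemma eight_le_lam {n : ℕ} (hn : 1 ≤ n) : 8 ≤ lam n := by
  have hn' : (1 : ℝ) ≤ n := by exact_mod_cast hn
  have : (2 : ℝ) ≤ n * (n + 1) := by nlinarith
  unfold lam
  nlinarith

lemma two_le_lam_mul_sq_slope_sub {m n : ℕ} (hn : 1 ≤ n) (hmn : m ≠ n) :
    2 ≤ lam n * (slope m - slope n) ^ 2 := by
  have h := one_le_mul_abs_slope_sub hn hmn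
  have h2 : 1 ≤ (n * (n + 1) * |slope m - slope n|) ^ 2 := one_le_pow₀ h
  rw [mul_pow, sq_abs] at h2
  unfold lam
  linarith

lemma norm_peak_add_smul_e₂_le {n : ℕ} (hn : 1 ≤ n) {ε : ℝ} (hε : |ε| = 1) :
    ‖peak n + ε • e₂‖ ≤ lam n * (1 + slope n ^ 2) + ε * (-1) ^ n := by
  have hsign (k : ℕ) : |ε * (-1) ^ k| = 1 := by simp [abs_mul, hε]
  have hsign_n := abs_le.1 (hsign n).le
  have hlam := eight_le_lam hn
  rw [norm_le_iff (by nlinarith [sq_nonneg (slope n)])]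
  intro m
  rw [map_add, _root_.map_smul, coord_peak, coord_e₂, smul_eq_mul]
  rcases eq_or_ne m n with rfl | hmn
  · rw [sub_self, zero_pow two_ne_zero, sub_zero]
    exact (abs_of_nonneg (by nlinarith [sq_nonneg (slope m)])).le
  · have hgap := two_le_lam_mul_sq_slope_sub hn hmn
    have hsq : (slope m - slope n) ^ 2 ≤ 1 := by
      rw [sq_le_one_iff_abs_le_one, abs_le]
      constructor <;> linarith [slope_nonneg m, slope_le_one m, slope_nonneg n, slope_le_one n]
    have hsign_m := abs_le.1 (hsign m).le
    rw [abs_le]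
    constructor <;> nlinarith [sq_nonneg (slope n)]

theorem apply_e₂_eq_neg_one_pow (T : B →L[ℝ] C(OnePoint ℕ, ℝ)) (hTt : ∀ a : A, T a = t a)
    (hT : ‖T‖ ≤ 1) {n : ℕ} (hn : 1 ≤ n) : T e₂ n = (-1) ^ n := by
  let φ : B →ₗ[ℝ] ℝ := (ContinuousMap.evalCLM ℝ (n : OnePoint ℕ) ∘L T).toLinearMap
  have hφ (z : B) : φ z ≤ ‖z‖ := calc
    T z n ≤ ‖T z‖ := (le_abs_self _).trans (ContinuousMap.norm_coe_le_norm (T z) n)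
    _ ≤ ‖T‖ * ‖z‖ := T.le_opNorm z
    _ ≤ ‖z‖ := mul_le_of_le_one_left (norm_nonneg z) hT
  have hφ_peak : φ (peak n) = lam n * (1 + slope n ^ 2) := calc
    T (peak n) n = t ⟨peak n, peak_mem_A n⟩ n := by rw [← hTt]
    _ = lam n * (1 + slope n ^ 2) := by rw [t_apply_coe, coord_peak, sub_self]; ring
  refine eq_of_forall_norm_add_smul_le φ hφ (y := peak n) fun ε hε ↦ ?_
  rw [hφ_peak]
  exact norm_peak_add_smul_e₂_le hn hε

end

end SpaceC

/-- The space `c` of convergent sequences, realized as `C(ℕ∞, ℝ)`, the continuous functions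
on the one-point compactification of `ℕ` with the supremum norm, is not locally
`1`-injective: some operator from a subspace of a finite-dimensional Banach space into `c`
admits no equal-norm linear extension. -/
theorem spaceC_not_locallyInjective1 :
    ∃ B : BanachSpace.{0}, FiniteDimensional ℝ B.carrier ∧
      ∃ (A : Submodule ℝ B.carrier) (t : A →L[ℝ] C(OnePoint ℕ, ℝ)),
        ¬ ∃ T : B.carrier →L[ℝ] C(OnePoint ℕ, ℝ),
            (∀ a : A, T (a : B.carrier) = t a) ∧ ‖T‖ = ‖t‖ := by
  refine ⟨⟨SpaceC.B⟩, inferInstance, SpaceC.A, SpaceC.t, ?_⟩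
  rintro ⟨T, hTt, hT⟩
  apply (T SpaceC.e₂).not_eventually_eq_neg_one_pow
  filter_upwards [eventually_ge_atTop 1] with n hn
  exact SpaceC.apply_e₂_eq_neg_one_pow T hTt (hT.trans_le SpaceC.norm_t_le_one) hn
end

section
/- Let α ≤ β be infinite cardinals. Every Banach space of (α, β)-universal disposition is (α, β)-automorphic: for all Banach spaces A with density character < α and B with density character < β, and all linear topological embeddings (isomorphisms onto their ranges) u : A → E and i : A → B, there is a linear topological embedding u' : B → E with u' ∘ i = u. -/
/-! Renorm `A` by `a ↦ ‖u a‖` and `B` by the inf-convolution `b ↦ ⨅ a, ‖u a‖ + K ‖b - i a‖`.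
For `K` large enough (so that `‖u a‖ ≤ K ‖i a‖`) both are norms equivalent to the original ones,
and they make `u` and `i` isometric embeddings. Universal disposition then extends `u` along `i`
to an isometric embedding of the renormed `B`, which is an isomorphic embedding of `B` itself. -/

universe u

/-- A topological space has density character `< κ`: there is a dense subset of
cardinality `< κ`. -/
def DensityLT (X : Type u) [TopologicalSpace X] (κ : Cardinal.{u}) : Prop :=
  ∃ s : Set X, Dense s ∧ Cardinal.mk s < κ

/-- `E` is `(α, β)₁`-injective: for every Banach space `B` with density character `< β` and
every closed subspace `A ⊆ B` of density character `< α`, every operator `t : A → E`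
extends to `T : B → E` with `‖T‖ ≤ ‖t‖`. -/
def IsABInjective1 (α β : Cardinal.{u}) (E : BanachSpace.{u}) : Prop :=
  ∀ B : BanachSpace.{u}, DensityLT B.carrier β →
    ∀ A : Submodule ℝ B.carrier, IsClosed (A : Set B.carrier) → DensityLT A α →
      ∀ t : A →L[ℝ] E.carrier, ∃ T : B.carrier →L[ℝ] E.carrier,
        (∀ a : A, T (a : B.carrier) = t a) ∧ ‖T‖ ≤ ‖t‖

/-- `U` is of `(α, β)`-universal disposition: given Banach spaces `A` of density character
`< α` and `B` of density character `< β` and isometric embeddings `u : A → U`, `i : A → B`,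
there is an isometric embedding `u' : B → U` with `u' ∘ i = u`. -/
def IsABUnivDisp (α β : Cardinal.{u}) (U : BanachSpace.{u}) : Prop :=
  ∀ A B : BanachSpace.{u}, DensityLT A.carrier α → DensityLT B.carrier β →
    ∀ (u : A.carrier →ₗᵢ[ℝ] U.carrier) (i : A.carrier →ₗᵢ[ℝ] B.carrier),
      ∃ u' : B.carrier →ₗᵢ[ℝ] U.carrier, ∀ a : A.carrier, u' (i a) = u a

/-- A continuous linear map is a linear topological embedding (an isomorphism onto its
range) iff it is bounded below. -/
def IsLinearTopEmbedding {A E : Type u} [NormedAddCommGroup A] [NormedSpace ℝ A]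
    [NormedAddCommGroup E] [NormedSpace ℝ E] (u : A →L[ℝ] E) : Prop :=
  ∃ c : ℝ, 0 < c ∧ ∀ a : A, c * ‖a‖ ≤ ‖u a‖

open Set
open scoped Uniformity NNReal

section ExtensionSeminorm

variable {𝕜 A B E : Type*} [NormedField 𝕜] [SeminormedAddCommGroup A] [NormedSpace 𝕜 A]
  [SeminormedAddCommGroup B] [NormedSpace 𝕜 B] [SeminormedAddCommGroup E] [NormedSpace 𝕜 E]
  (u : A →L[𝕜] E) (i : A →L[𝕜] B) (K : ℝ≥0)

theorem bddBelow_range_norm_add_mul_norm_sub (b : B) :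
    BddBelow (range fun a => ‖u a‖ + K * ‖b - i a‖) :=
  ⟨0, by rintro _ ⟨a, rfl⟩; positivity⟩

/-- The largest seminorm on `B` that is at most `K ‖·‖` and at most `‖u a‖` at `i a`. -/
noncomputable def extensionSeminorm : Seminorm 𝕜 B :=
  .ofSMulLE (fun b => ⨅ a, ‖u a‖ + K * ‖b - i a‖)
    (le_antisymm (ciInf_le_of_le (bddBelow_range_norm_add_mul_norm_sub u i K 0) 0 (by simp))
      (le_ciInf fun _ => by positivity))
    (fun b₁ b₂ => le_ciInf_add_ciInf fun a₁ a₂ =>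
      ciInf_le_of_le (bddBelow_range_norm_add_mul_norm_sub u i K _) (a₁ + a₂) <| by
        have hu : ‖u (a₁ + a₂)‖ ≤ ‖u a₁‖ + ‖u a₂‖ := by
          rw [map_add]; exact norm_add_le _ _
        have hi : ‖b₁ + b₂ - i (a₁ + a₂)‖ ≤ ‖b₁ - i a₁‖ + ‖b₂ - i a₂‖ := by
          rw [map_add, add_sub_add_comm]; exact norm_add_le _ _
        have := mul_le_mul_of_nonneg_left hi K.coe_nonneg
        linarith)
    (fun c b => by
      rw [Real.mul_iInf_of_nonneg (norm_nonneg c)]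
      refine le_ciInf fun a => ciInf_le_of_le (bddBelow_range_norm_add_mul_norm_sub u i K _)
        (c • a) (le_of_eq ?_)
      rw [map_smul, map_smul, ← smul_sub, norm_smul, norm_smul]
      ring)

theorem extensionSeminorm_apply (b : B) :
    extensionSeminorm u i K b = ⨅ a, ‖u a‖ + K * ‖b - i a‖ :=
  rfl

theorem extensionSeminorm_le (b : B) (a : A) :
    extensionSeminorm u i K b ≤ ‖u a‖ + K * ‖b - i a‖ :=
  ciInf_le (bddBelow_range_norm_add_mul_norm_sub u i K b) a

theorem extensionSeminorm_le_mul_norm (b : B) : extensionSeminorm u i K b ≤ K * ‖b‖ := by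
  simpa using extensionSeminorm_le u i K b 0

theorem extensionSeminorm_apply_map (huK : ∀ a, ‖u a‖ ≤ K * ‖i a‖) (a : A) :
    extensionSeminorm u i K (i a) = ‖u a‖ := by
  refine le_antisymm (by simpa using extensionSeminorm_le u i K (i a) a) (le_ciInf fun a' => ?_)
  calc ‖u a‖ ≤ ‖u a'‖ + ‖u (a - a')‖ := by
        simpa [map_sub] using norm_le_insert' (u a) (u a')
    _ ≤ ‖u a'‖ + K * ‖i a - i a'‖ := by gcongr; simpa [map_sub] using huK (a - a')

theorem norm_le_mul_extensionSeminorm (hK : 0 < K) {c : ℝ} (hc : ∀ a, ‖i a‖ ≤ c * ‖u a‖)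
    (b : B) : ‖b‖ ≤ max c (K : ℝ)⁻¹ * extensionSeminorm u i K b := by
  rw [extensionSeminorm_apply, Real.mul_iInf_of_nonneg (by positivity)]
  refine le_ciInf fun a => ?_
  calc ‖b‖ ≤ ‖i a‖ + (K : ℝ)⁻¹ * K * ‖b - i a‖ := by
        rw [inv_mul_cancel₀ (by positivity), one_mul]; exact norm_le_insert' b (i a)
    _ ≤ max c (K : ℝ)⁻¹ * ‖u a‖ + max c (K : ℝ)⁻¹ * K * ‖b - i a‖ := by
        gcongr
        · exact (hc a).trans (by gcongr; exact le_max_left _ _)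
        · exact le_max_right _ _
    _ = max c (K : ℝ)⁻¹ * (‖u a‖ + K * ‖b - i a‖) := by ring

end ExtensionSeminorm

namespace BanachSpace

variable (X : BanachSpace.{u}) (p : Seminorm ℝ X) {c K : ℝ}

theorem normedSpaceCore_of_norm_le_mul (hlow : ∀ x, ‖x‖ ≤ c * p x) :
    letI : Norm X := ⟨p⟩; NormedSpace.Core ℝ X :=
  letI : Norm X := ⟨p⟩
  { norm_nonneg := apply_nonneg p
    norm_smul := map_smul_eq_mul p
    norm_triangle := map_add_le_add p
    norm_eq_zero_iff := fun x =>
      ⟨fun hx => norm_le_zero_iff.mp (by simpa [show p x = 0 from hx] using hlow x),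
        fun hx => hx ▸ map_zero p⟩ }

theorem uniformity_eq_of_norm_le_mul (hlow : ∀ x, ‖x‖ ≤ c * p x) (hup : ∀ x, p x ≤ K * ‖x‖) :
    letI : Norm X := ⟨p⟩
    𝓤 X = 𝓤[PseudoEMetricSpace.toUniformSpace
      (self := .ofSeminormedSpaceCore (normedSpaceCore_of_norm_le_mul X p hlow).toCore)] := by
  have small : ∀ {a b r ε : ℝ}, a ≤ r * b → 0 ≤ b → b < ε / (|r| + 1) → a < ε := by
    intro a b r ε hab hb hlt
    rw [lt_div_iff₀ (by positivity)] at hlt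
    nlinarith [le_abs_self r]
  refine Metric.uniformity_basis_dist.ext (letI : Norm X := ⟨p⟩
    @Metric.uniformity_basis_dist X
      (.ofSeminormedSpaceCore (normedSpaceCore_of_norm_le_mul X p hlow).toCore))
    (fun ε hε => ⟨ε / (|c| + 1), by positivity, fun xy hxy => ?_⟩)
    (fun ε hε => ⟨ε / (|K| + 1), by positivity, fun xy hxy => ?_⟩)
  · change p (-xy.1 + xy.2) < _ at hxy
    change dist xy.1 xy.2 < ε
    rw [neg_add_eq_sub] at hxy
    rw [dist_eq_norm']
    exact small (hlow _) (apply_nonneg p _) hxy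
  · change dist xy.1 xy.2 < _ at hxy
    change p (-xy.1 + xy.2) < ε
    rw [neg_add_eq_sub]
    rw [dist_eq_norm'] at hxy
    exact small (hup _) (norm_nonneg _) hxy

/-- `X` renormed by an equivalent norm `p`. The uniform structure of `X` is kept definitionally, so
completeness and density are inherited for free. -/
noncomputable def renorm (hlow : ∀ x, ‖x‖ ≤ c * p x) (hup : ∀ x, p x ≤ K * ‖x‖) :
    BanachSpace.{u} :=
  letI : Norm X := ⟨p⟩
  letI core := normedSpaceCore_of_norm_le_mul X p hlow
  letI := NormedAddCommGroup.ofCoreReplaceUniformity core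
    (uniformity_eq_of_norm_le_mul X p hlow hup)
  { carrier := X
    space := @NormedSpace.ofCore _ _ _ _ X.space.toModule core
    complete := X.complete }

variable {X p} (hlow : ∀ x, ‖x‖ ≤ c * p x) (hup : ∀ x, p x ≤ K * ‖x‖)

theorem densityLT_renorm {κ : Cardinal.{u}} :
    DensityLT (X.renorm p hlow hup) κ ↔ DensityLT X κ :=
  Iff.rfl

theorem exists_isLinearTopEmbedding_of_renorm {F : Type u} [NormedAddCommGroup F]
    [NormedSpace ℝ F] (hc : 0 < c) (v : X.renorm p hlow hup →ₗᵢ[ℝ] F) :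
    ∃ v' : X →L[ℝ] F, IsLinearTopEmbedding v' ∧ ∀ x, v' x = v x :=
  ⟨LinearMap.mkContinuous ⟨⟨v, v.map_add⟩, v.map_smul⟩ K fun x => (v.norm_map x).trans_le (hup x),
    ⟨c⁻¹, inv_pos.mpr hc, fun x =>
      (inv_mul_le_iff₀ hc).2 <| (hlow x).trans_eq <| congrArg (c * ·) (v.norm_map x).symm⟩,
    fun _ => rfl⟩

end BanachSpace

theorem IsLinearTopEmbedding.exists_pos_norm_le_mul {A E F : Type u} [NormedAddCommGroup A]
    [NormedSpace ℝ A] [NormedAddCommGroup E] [NormedSpace ℝ E] [SeminormedAddCommGroup F]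
    [NormedSpace ℝ F] {u : A →L[ℝ] E} (hu : IsLinearTopEmbedding u) (v : A →L[ℝ] F) :
    ∃ C > 0, ∀ a, ‖v a‖ ≤ C * ‖u a‖ := by
  obtain ⟨c, hc, hcu⟩ := hu
  refine ⟨(‖v‖ + 1) / c, by positivity, fun a => ?_⟩
  calc ‖v a‖ ≤ (‖v‖ + 1) * ‖a‖ := by grw [v.le_opNorm a]; nlinarith [norm_nonneg a]
    _ = (‖v‖ + 1) / c * (c * ‖a‖) := by field_simp
    _ ≤ (‖v‖ + 1) / c * ‖u a‖ := by grw [hcu a]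

theorem abUnivDisp_abAutomorphic_general
    (α β : Cardinal.{u})
    (E : BanachSpace.{u}) (hE : IsABUnivDisp α β E) :
    ∀ A B : BanachSpace.{u}, DensityLT A.carrier α → DensityLT B.carrier β →
      ∀ (u : A.carrier →L[ℝ] E.carrier) (i : A.carrier →L[ℝ] B.carrier),
        IsLinearTopEmbedding u → IsLinearTopEmbedding i →
          ∃ u' : B.carrier →L[ℝ] E.carrier, IsLinearTopEmbedding u' ∧
            ∀ a : A.carrier, u' (i a) = u a := by
  intro A B hA hB u i hu hi
  obtain ⟨K, hK, huK⟩ := hi.exists_pos_norm_le_mul u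
  obtain ⟨C, -, hiC⟩ := hu.exists_pos_norm_le_mul i
  obtain ⟨c, hc, hcu⟩ := hu
  lift K to ℝ≥0 using hK.le
  let A' := A.renorm ((normSeminorm ℝ E).comp u.toLinearMap)
    (c := c⁻¹) (fun a => by simpa [le_inv_mul_iff₀ hc] using hcu a) u.le_opNorm
  let B' := B.renorm (extensionSeminorm u i K)
    (norm_le_mul_extensionSeminorm u i _ hK hiC) (extensionSeminorm_le_mul_norm u i _)
  let u₁ : A' →ₗᵢ[ℝ] E := { u.toLinearMap with norm_map' := fun _ => rfl }
  let i₁ : A' →ₗᵢ[ℝ] B' :=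
    { i.toLinearMap with norm_map' := extensionSeminorm_apply_map u i K huK }
  obtain ⟨v, hv⟩ := hE A' B' ((BanachSpace.densityLT_renorm _ _).2 hA)
    ((BanachSpace.densityLT_renorm _ _).2 hB) u₁ i₁
  obtain ⟨u', hu', hu'v⟩ :=
    BanachSpace.exists_isLinearTopEmbedding_of_renorm _ _ (by positivity) v
  exact ⟨u', hu', fun a => (hu'v _).trans (hv a)⟩

/-- For infinite cardinals `α ≤ β`, every Banach space of `(α, β)`-universal disposition is
`(α, β)`-automorphic: linear topological embeddings extend as well. -/
theorem abUnivDisp_abAutomorphic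
    (α β : Cardinal.{u}) (hα : Cardinal.aleph0 ≤ α) (hαβ : α ≤ β)
    (E : BanachSpace.{u}) (hE : IsABUnivDisp α β E) :
    ∀ A B : BanachSpace.{u}, DensityLT A.carrier α → DensityLT B.carrier β →
      ∀ (u : A.carrier →L[ℝ] E.carrier) (i : A.carrier →L[ℝ] B.carrier),
        IsLinearTopEmbedding u → IsLinearTopEmbedding i →
          ∃ u' : B.carrier →L[ℝ] E.carrier, IsLinearTopEmbedding u' ∧
            ∀ a : A.carrier, u' (i a) = u a :=
  abUnivDisp_abAutomorphic_general α β E hE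
end

section
/- The Banach space c₀ of real sequences converging to zero (with the supremum norm) is locally 1-injective: for every finite-dimensional Banach space B and every subspace A ⊆ B, every linear operator t : A → c₀ extends to a linear operator T : B → c₀ with ‖T‖ = ‖t‖. -/
open scoped ZeroAtInfty

/-!
Extend every coordinate functional of `t` to the whole space by Hahn–Banach, without increasing
its norm. On a finite-dimensional domain pointwise convergence of functionals is convergence in
norm, so the coordinates of `t`, and with them their extensions, tend to `0` in norm. Hence the
extensions are the coordinates of an operator into `c₀`, whose norm is at most the supremum of
their norms, which is at most `‖t‖`.
-/

open Filter Topology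
open scoped NNReal

theorem tendsto_clm_apply_iff {𝕜 E F ι : Type*} [NontriviallyNormedField 𝕜] [CompleteSpace 𝕜]
    [NormedAddCommGroup E] [NormedSpace 𝕜 E] [FiniteDimensional 𝕜 E]
    [NormedAddCommGroup F] [NormedSpace 𝕜 F] {f : ι → E →L[𝕜] F} {g : E →L[𝕜] F}
    {l : Filter ι} :
    Tendsto f l (𝓝 g) ↔ ∀ y, Tendsto (fun i ↦ f i y) l (𝓝 (g y)) := by
  refine ⟨fun h y ↦ ((ContinuousLinearMap.apply 𝕜 F y).continuous.tendsto g).comp h,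
    fun h ↦ ?_⟩
  let e : (E →L[𝕜] F) ≃L[𝕜] Fin (Module.finrank 𝕜 E) → F :=
    ((ContinuousLinearEquiv.ofFinrankEq (Module.finrank_fin_fun 𝕜).symm).arrowCongr
      (1 : F ≃L[𝕜] F)).trans (ContinuousLinearEquiv.piRing _)
  rw [e.toHomeomorph.isInducing.tendsto_nhds_iff]
  exact tendsto_pi_nhds.mpr fun i ↦ h _

namespace ZeroAtInftyContinuousMap

variable {α β 𝕜 : Type*} [TopologicalSpace α] [NontriviallyNormedField 𝕜]
  [NormedAddCommGroup β] [NormedSpace 𝕜 β]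

variable (𝕜) in
noncomputable def evalCLM (x : α) : C₀(α, β) →L[𝕜] β :=
  LinearMap.mkContinuous
    { toFun := fun f ↦ f x
      map_add' := fun _ _ ↦ rfl
      map_smul' := fun _ _ ↦ rfl } 1
    fun f ↦ by simpa using f.toBCF.norm_coe_le_norm x

theorem norm_evalCLM_le (x : α) : ‖(evalCLM 𝕜 x : C₀(α, β) →L[𝕜] β)‖ ≤ 1 :=
  LinearMap.mkContinuous_norm_le _ zero_le_one _

section Discrete

variable [DiscreteTopology α] {E : Type*} [NormedAddCommGroup E] [NormedSpace 𝕜 E]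

noncomputable def clmOfCoords (g : α → E →L[𝕜] β)
    (hg : ∀ x, Tendsto (fun a ↦ g a x) (cocompact α) (𝓝 0)) (C : ℝ≥0)
    (hC : ∀ a, ‖g a‖ ≤ C) : E →L[𝕜] C₀(α, β) :=
  LinearMap.mkContinuous
    { toFun := fun x ↦
        { toFun := fun a ↦ g a x
          continuous_toFun := continuous_of_discreteTopology
          zero_at_infty' := hg x }
      map_add' := fun x y ↦ by ext a; simp
      map_smul' := fun c x ↦ by ext a; simp } C
    fun x ↦ by
      rw [← norm_toBCF_eq_norm]
      exact BoundedContinuousFunction.norm_le (by positivity) |>.mpr fun a ↦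
        (g a).le_opNorm x |>.trans (by gcongr; exact hC a)

variable {g : α → E →L[𝕜] β} {hg : ∀ x, Tendsto (fun a ↦ g a x) (cocompact α) (𝓝 0)}
  {C : ℝ≥0} {hC : ∀ a, ‖g a‖ ≤ C}

theorem norm_clmOfCoords_le : ‖clmOfCoords g hg C hC‖ ≤ C :=
  LinearMap.mkContinuous_norm_le _ C.2 _

end Discrete

theorem exists_extension_norm_eq {𝕜 α E : Type*} [RCLike 𝕜] [TopologicalSpace α]
    [DiscreteTopology α] [NormedAddCommGroup E] [NormedSpace 𝕜 E] (p : Submodule 𝕜 E)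
    [FiniteDimensional 𝕜 p] (t : p →L[𝕜] C₀(α, 𝕜)) :
    ∃ T : E →L[𝕜] C₀(α, 𝕜), (∀ x : p, T x = t x) ∧ ‖T‖ = ‖t‖ := by
  set f : α → p →L[𝕜] 𝕜 := fun a ↦ (evalCLM 𝕜 a).comp t
  have hf : Tendsto f (cocompact α) (𝓝 0) :=
    tendsto_clm_apply_iff.mpr fun y ↦ (t y).zero_at_infty'
  choose g hgf hg using fun a ↦ _root_.exists_extension_norm_eq p (f a)
  have hg_tendsto : Tendsto g (cocompact α) (𝓝 0) := by
    rw [tendsto_zero_iff_norm_tendsto_zero] at hf ⊢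
    simpa only [hg] using hf
  have hg_apply (x : E) : Tendsto (fun a ↦ g a x) (cocompact α) (𝓝 0) :=
    ((ContinuousLinearMap.apply 𝕜 𝕜 x).continuous.tendsto' 0 0 (map_zero _)).comp hg_tendsto
  have hg_le (a : α) : ‖g a‖ ≤ ‖t‖ :=
    calc ‖g a‖ = ‖f a‖ := hg a
      _ ≤ ‖(evalCLM 𝕜 a : C₀(α, 𝕜) →L[𝕜] 𝕜)‖ * ‖t‖ := ContinuousLinearMap.opNorm_comp_le _ _
      _ ≤ ‖t‖ := mul_le_of_le_one_left (norm_nonneg t) (norm_evalCLM_le a)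
  set T := clmOfCoords g hg_apply ‖t‖₊ hg_le
  have hT : T.comp p.subtypeL = t := by
    ext x a
    exact hgf a x
  refine ⟨T, fun x ↦ congr($hT x), norm_clmOfCoords_le.antisymm ?_⟩
  calc ‖t‖ = ‖T.comp p.subtypeL‖ := by rw [hT]
    _ ≤ ‖T‖ * ‖p.subtypeL‖ := ContinuousLinearMap.opNorm_comp_le _ _
    _ ≤ ‖T‖ := mul_le_of_le_one_right (norm_nonneg T) (Submodule.norm_subtypeL_le p)

end ZeroAtInftyContinuousMap

/-- The space `c₀ = C₀(ℕ, ℝ)` of real sequences converging to zero, with the supremum norm,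
is locally `1`-injective: for every finite-dimensional Banach space `B` and subspace
`A ⊆ B`, every operator `t : A → c₀` extends to `T : B → c₀` with `‖T‖ = ‖t‖`. -/
theorem czero_locallyInjective1 :
    ∀ B : BanachSpace.{0}, FiniteDimensional ℝ B.carrier →
      ∀ (A : Submodule ℝ B.carrier) (t : A →L[ℝ] C₀(ℕ, ℝ)),
        ∃ T : B.carrier →L[ℝ] C₀(ℕ, ℝ),
          (∀ a : A, T (a : B.carrier) = t a) ∧ ‖T‖ = ‖t‖ := by
  intro B _ A t
  exact ZeroAtInftyContinuousMap.exists_extension_norm_eq A t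
end

section
/- If U is a Banach space of 𝔉-universal disposition, then every separable Banach space embeds isometrically into U: for every separable Banach space X there is a linear isometric embedding of X into U. -/
/-- `U` is of universal disposition for finite-dimensional Banach spaces. -/
def IsUnivDispFin (U : BanachSpace.{u}) : Prop :=
  ∀ A B : BanachSpace.{u}, FiniteDimensional ℝ A.carrier → FiniteDimensional ℝ B.carrier →
    ∀ (u : A.carrier →ₗᵢ[ℝ] U.carrier) (i : A.carrier →ₗᵢ[ℝ] B.carrier),
      ∃ u' : B.carrier →ₗᵢ[ℝ] U.carrier, ∀ a : A.carrier, u' (i a) = u a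

theorem LinearIsometry.exists_extension_of_dense {𝕜 E F : Type*} [NormedField 𝕜]
    [SeminormedAddCommGroup E] [NormedSpace 𝕜 E] [NormedAddCommGroup F] [NormedSpace 𝕜 F]
    [CompleteSpace F] {p : Submodule 𝕜 E} (hp : Dense (p : Set E)) (f : p →ₗᵢ[𝕜] F) :
    ∃ g : E →ₗᵢ[𝕜] F, ∀ x : p, g x = f x := by
  set g := f.toContinuousLinearMap.extend p.subtypeL
  have hg : ∀ x : p, g x = f x :=
    f.toContinuousLinearMap.extend_eq hp.denseRange_val isometry_subtype_coe.isUniformInducing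
  have hnorm : (fun x => ‖g x‖) = (fun x => ‖x‖) :=
    Continuous.ext_on hp g.continuous.norm continuous_norm fun x hx => by
      simpa using congrArg norm (hg ⟨x, hx⟩)
  exact ⟨⟨g.toLinearMap, congrFun hnorm⟩, hg⟩

namespace LinearPMap

variable {R E F : Type*} [Ring R] [SeminormedAddCommGroup E] [Module R E]
  [SeminormedAddCommGroup F] [Module R F]

theorem norm_sSup_apply {c : Set (E →ₗ.[R] F)} (hc : DirectedOn (· ≤ ·) c)
    (hnorm : ∀ f ∈ c, ∀ x : f.domain, ‖f x‖ = ‖(x : E)‖)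
    (x : (LinearPMap.sSup c hc).domain) : ‖LinearPMap.sSup c hc x‖ = ‖(x : E)‖ := by
  rcases c.eq_empty_or_nonempty with rfl | hne
  · have hx : x = 0 := Subtype.ext (by simpa [domain_sSup] using x.2)
    simp [hx]
  · obtain ⟨f, hf, hx⟩ := (mem_domain_sSup_iff hne hc).1 x.2
    rw [← hnorm f hf ⟨x, hx⟩, ← LinearPMap.sSup_apply hc hf ⟨x, hx⟩]

end LinearPMap

theorem LinearIsometry.exists_extension_to_iSup {R E F : Type*} [Ring R]
    [SeminormedAddCommGroup E] [Module R E] [SeminormedAddCommGroup F] [Module R F]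
    {A : ℕ → Submodule R E} (hA : Monotone A) (u : ∀ n, A n →ₗᵢ[R] F)
    (hu : ∀ n (x : A n), u (n + 1) (Submodule.inclusion (hA n.le_succ) x) = u n x) :
    ∃ v : ↥(⨆ n, A n) →ₗᵢ[R] F, ∀ n (x : A n),
      v (Submodule.inclusion (le_iSup A n) x) = u n x := by
  let g : ℕ → E →ₗ.[R] F := fun n => ⟨A n, (u n).toLinearMap⟩
  have hg : Monotone g := monotone_nat_of_le_succ fun n =>
    ⟨hA n.le_succ, fun x y hxy => by
      show u n x = u (n + 1) y
      rw [← hu n x]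
      exact congrArg (u (n + 1)) (Subtype.ext hxy)⟩
  have hc : DirectedOn (· ≤ ·) (Set.range g) := directedOn_range.2 hg.directed_le
  have hdom : (LinearPMap.sSup _ hc).domain = ⨆ n, A n := by
    rw [LinearPMap.domain_sSup, ← Set.range_comp]; rfl
  let w : (LinearPMap.sSup _ hc).domain →ₗᵢ[R] F :=
    ⟨(LinearPMap.sSup _ hc).toFun, LinearPMap.norm_sSup_apply hc <| by
      rintro _ ⟨n, rfl⟩ x
      exact (u n).norm_map x⟩
  exact ⟨w.comp (LinearIsometryEquiv.ofEq _ _ hdom.symm).toLinearIsometry,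
    fun n x => LinearPMap.sSup_apply hc ⟨n, rfl⟩ x⟩

theorem IsUnivDispFin.exists_extension {U : BanachSpace.{u}} (hU : IsUnivDispFin U) {E : Type u}
    [NormedAddCommGroup E] [NormedSpace ℝ E] {p q : Submodule ℝ E} (hpq : p ≤ q)
    [FiniteDimensional ℝ q] (f : p →ₗᵢ[ℝ] U) :
    ∃ g : q →ₗᵢ[ℝ] U, ∀ x : p, g (Submodule.inclusion hpq x) = f x :=
  have : FiniteDimensional ℝ p := Submodule.finiteDimensional_of_le hpq
  hU ⟨p⟩ ⟨q⟩ ‹_› ‹_› f ⟨Submodule.inclusion hpq, fun _ => rfl⟩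

theorem IsUnivDispFin.exists_compatible_seq {U : BanachSpace.{u}} (hU : IsUnivDispFin U)
    {E : Type u} [NormedAddCommGroup E] [NormedSpace ℝ E] {A : ℕ → Submodule ℝ E}
    (hA : Monotone A) [∀ n, FiniteDimensional ℝ (A n)] (u₀ : A 0 →ₗᵢ[ℝ] U) :
    ∃ u : ∀ n, A n →ₗᵢ[ℝ] U,
      ∀ n (x : A n), u (n + 1) (Submodule.inclusion (hA n.le_succ) x) = u n x := by
  choose extend h_extend using fun n : ℕ => hU.exists_extension (hA n.le_succ)
  exact ⟨fun n => Nat.rec u₀ extend n, fun n => h_extend n _⟩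

/-- Every separable Banach space embeds isometrically into any Banach space of universal
disposition for finite-dimensional spaces. -/
theorem separable_embeds_univDispFin (U : BanachSpace.{u}) (hU : IsUnivDispFin U)
    (X : BanachSpace.{u}) (hX : TopologicalSpace.SeparableSpace X.carrier) :
    Nonempty (X.carrier →ₗᵢ[ℝ] U.carrier) := by
  obtain ⟨s, hs⟩ := TopologicalSpace.exists_dense_seq X.carrier
  let A : ℕ → Submodule ℝ X.carrier := fun n => Submodule.span ℝ (s '' Set.Iio n)
  have hA : Monotone A := fun m n hmn =>
    Submodule.span_mono (Set.image_mono (Set.Iio_subset_Iio hmn))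
  have (n : ℕ) : FiniteDimensional ℝ (A n) :=
    FiniteDimensional.span_of_finite ℝ ((Set.finite_Iio n).image s)
  have hA₀ (x : A 0) : x = 0 := Subtype.ext (by simpa [A] using x.2)
  obtain ⟨u, hu⟩ := hU.exists_compatible_seq hA ⟨0, fun x => by simp [hA₀ x]⟩
  obtain ⟨v, -⟩ := LinearIsometry.exists_extension_to_iSup hA u hu
  have hdense : Dense ((⨆ n, A n : Submodule ℝ X.carrier) : Set X.carrier) :=
    hs.mono <| Set.range_subset_iff.2 fun n =>
      Submodule.mem_iSup_of_mem (n + 1) (Submodule.subset_span ⟨n, n.lt_succ_self, rfl⟩)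
  obtain ⟨g, -⟩ := v.exists_extension_of_dense hdense
  exact ⟨g⟩
end

section
/- No Banach space of 𝔉-universal disposition is polyhedral: if U is of 𝔉-universal disposition, then there exists a finite-dimensional subspace of U whose closed unit ball is not the convex hull of a finite set of points. -/
noncomputable section Helpers

local notation "E2" => EuclideanSpace ℝ (Fin 2)

lemma e2_sphere_infinite : (Metric.sphere (0 : E2) 1).Infinite := by
  have key : ∀ t : ℝ, t ∈ Set.Icc (0:ℝ) 1 →
      ((WithLp.equiv 2 (Fin 2 → ℝ)).symm ![t, Real.sqrt (1 - t^2)]) ∈ Metric.sphere (0 : E2) 1 := by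
    rintro t ⟨h0, h1⟩
    rw [Metric.mem_sphere, dist_zero_right, EuclideanSpace.norm_eq]
    have ht2 : (0:ℝ) ≤ 1 - t^2 := by nlinarith
    have : ∑ i : Fin 2, ‖(WithLp.equiv 2 (Fin 2 → ℝ)).symm ![t, Real.sqrt (1 - t^2)] i‖ ^ 2 = 1 := by
      simp [Fin.sum_univ_two, Real.sq_sqrt ht2, abs_of_nonneg h0, sq_abs]
    rw [this, Real.sqrt_one]
  have hmaps : Set.MapsTo (fun t : ℝ => (WithLp.equiv 2 (Fin 2 → ℝ)).symm ![t, Real.sqrt (1 - t^2)])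
      (Set.Icc (0:ℝ) 1) (Metric.sphere (0 : E2) 1) := key
  have hinj : Set.InjOn (fun t : ℝ => (WithLp.equiv 2 (Fin 2 → ℝ)).symm ![t, Real.sqrt (1 - t^2)])
      (Set.Icc (0:ℝ) 1) := by
    intro a _ b _ hab
    have := congrArg (fun x : E2 => x 0) hab
    simpa using this
  have : Set.Infinite ((fun t : ℝ => (WithLp.equiv 2 (Fin 2 → ℝ)).symm ![t, Real.sqrt (1 - t^2)]) ''
      Set.Icc (0:ℝ) 1) := ((Set.Icc_infinite (a := (0:ℝ)) (b := 1) (by norm_num)).image hinj)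
  exact this.mono (Set.image_subset_iff.2 hmaps)

lemma sphere_subset_extremePoints {F : Type*} [NormedAddCommGroup F] [NormedSpace ℝ F]
    [StrictConvexSpace ℝ F] :
    Metric.sphere (0 : F) 1 ⊆ (Metric.closedBall (0 : F) 1).extremePoints ℝ := by
  intro x hx
  rw [mem_extremePoints]
  refine ⟨Metric.sphere_subset_closedBall hx, fun x₁ h₁ x₂ h₂ hseg => ?_⟩
  by_cases h : x₁ = x₂
  · subst h
    rw [openSegment_same] at hseg
    exact ⟨hseg.symm, hseg.symm⟩
  · exfalso
    have := openSegment_subset_ball_of_ne h₁ h₂ h hseg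
    rw [Metric.mem_ball, dist_zero_right] at this
    rw [Metric.mem_sphere, dist_zero_right] at hx
    linarith

lemma e2_not_polyhedral {F : Type*} [NormedAddCommGroup F] [NormedSpace ℝ F]
    (g : E2 ≃ₗᵢ[ℝ] F) :
    ¬ ∃ s : Set F, s.Finite ∧ convexHull ℝ s = Metric.closedBall (0 : F) 1 := by
  rintro ⟨s, hfin, hs⟩
  set s' : Set E2 := g.symm '' s with hs'
  have h1 := ((g.symm.toLinearEquiv.toLinearMap).image_convexHull s).symm
  simp only [LinearEquiv.coe_coe, LinearIsometryEquiv.coe_toLinearEquiv] at h1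
  have hch : convexHull ℝ s' = Metric.closedBall (0 : E2) 1 := by
    rw [hs']
    calc convexHull ℝ (⇑g.symm '' s) = ⇑g.symm '' (convexHull ℝ s) := h1
      _ = Metric.closedBall (0 : E2) 1 := by
          rw [hs, g.symm.image_closedBall, map_zero]
  have hsub : Metric.sphere (0 : E2) 1 ⊆ s' := by
    intro x hx
    have := sphere_subset_extremePoints hx
    rw [← hch] at this
    exact extremePoints_convexHull_subset this
  exact e2_sphere_infinite ((hfin.image g.symm).subset hsub)

end Helpers

/-- No Banach space of universal disposition for finite-dimensional spaces is polyhedral: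
it has a finite-dimensional subspace whose closed unit ball is not the convex hull of
finitely many points. -/
theorem univDispFin_not_polyhedral (U : BanachSpace.{u}) (hU : IsUnivDispFin U) :
    ∃ V : Submodule ℝ U.carrier, FiniteDimensional ℝ V ∧
      ¬ ∃ s : Set V, s.Finite ∧ convexHull ℝ s = Metric.closedBall (0 : V) 1 := by
  classical
  let A : BanachSpace.{u} := ⟨PUnit⟩
  let B : BanachSpace.{u} := ⟨ULift (EuclideanSpace ℝ (Fin 2))⟩
  have u0 : A.carrier →ₗᵢ[ℝ] U.carrier :=
    ⟨0, fun x => by simp [Subsingleton.elim x 0]⟩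
  have i0 : A.carrier →ₗᵢ[ℝ] B.carrier :=
    ⟨0, fun x => by simp [Subsingleton.elim x 0]⟩
  obtain ⟨u', -⟩ := hU A B inferInstance inferInstance u0 i0
  refine ⟨LinearMap.range u'.toLinearMap, inferInstance, ?_⟩
  exact e2_not_polyhedral
    (((LinearIsometryEquiv.ulift ℝ (EuclideanSpace ℝ (Fin 2))).symm).trans u'.equivRange)
end

section
/- Let ℵ be an infinite cardinal. A Banach space E is universally (1, ℵ)-injective (i.e., for every Banach space B and every closed subspace A ⊆ B with density character < ℵ, every bounded linear operator t : A → E extends to T : B → E with ‖T‖ ≤ ‖t‖) if and only if for every Banach space B with density character at most 2^ℵ and every closed subspace A ⊆ B with density character < ℵ, every bounded linear operator t : A → E extends to T : B → E with ‖T‖ ≤ ‖t‖. -/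
open scoped ENNReal


/-- A topological space has density character `≤ κ`. -/
def DensityLE (X : Type u) [TopologicalSpace X] (κ : Cardinal.{u}) : Prop :=
  ∃ s : Set X, Dense s ∧ Cardinal.mk s ≤ κ

/-- `ℓ∞(ι)` is `1`-injective: any operator from a subspace into it extends with the same
norm bound. -/
theorem lpInfty_injective {ι : Type v} {B : Type w} [NormedAddCommGroup B] [NormedSpace ℝ B]
    (A : Submodule ℝ B) (g : A →L[ℝ] lp (fun _ : ι => ℝ) ∞) :
    ∃ G : B →L[ℝ] lp (fun _ : ι => ℝ) ∞, (∀ a : A, G a = g a) ∧ ‖G‖ ≤ ‖g‖ := by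
  have hcoord : ∀ i : ι, ∃ Gi : B →L[ℝ] ℝ, (∀ a : A, Gi a = g a i) ∧ ‖Gi‖ ≤ ‖g‖ := by
    intro i
    have hb : ∀ a : A, ‖g a i‖ ≤ ‖g‖ * ‖a‖ := fun a =>
      (lp.norm_apply_le_norm ENNReal.top_ne_zero (g a) i).trans (g.le_opNorm a)
    let gi : A →L[ℝ] ℝ :=
      LinearMap.mkContinuous
        { toFun := fun a => g a i
          map_add' := fun x y => by simp [map_add]
          map_smul' := fun c x => by simp [map_smul] } ‖g‖ hb
    obtain ⟨Gi, hGi, hGin⟩ := exists_extension_norm_eq A gi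
    refine ⟨Gi, fun a => hGi a, ?_⟩
    rw [hGin]
    exact LinearMap.mkContinuous_norm_le _ (norm_nonneg g) _
  choose Gi hGi hGin using hcoord
  have hbdd : ∀ x : B, Memℓp (fun i => Gi i x) ∞ := by
    intro x
    refine memℓp_infty ⟨‖g‖ * ‖x‖, ?_⟩
    rintro r ⟨i, rfl⟩
    exact ((Gi i).le_opNorm x).trans (mul_le_mul_of_nonneg_right (hGin i) (norm_nonneg x))
  let Glin : B →ₗ[ℝ] lp (fun _ : ι => ℝ) ∞ :=
    { toFun := fun x => ⟨fun i => Gi i x, hbdd x⟩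
      map_add' := fun x y => Subtype.ext (funext fun i => map_add (Gi i) x y)
      map_smul' := fun c x => Subtype.ext (funext fun i => map_smul (Gi i) c x) }
  have hGb : ∀ x : B, ‖Glin x‖ ≤ ‖g‖ * ‖x‖ := by
    intro x
    refine lp.norm_le_of_forall_le (mul_nonneg (norm_nonneg g) (norm_nonneg x)) fun i => ?_
    exact ((Gi i).le_opNorm x).trans (mul_le_mul_of_nonneg_right (hGin i) (norm_nonneg x))
  refine ⟨Glin.mkContinuous ‖g‖ hGb, fun a => Subtype.ext (funext fun i => hGi i a), ?_⟩
  exact LinearMap.mkContinuous_norm_le _ (norm_nonneg g) _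

/-- Any normed space with a dense subset `s` embeds isometrically into `ℓ∞(s)`. -/
noncomputable def isometryIntoLpInfty {X : Type u} [NormedAddCommGroup X] [NormedSpace ℝ X]
    [CompleteSpace X] (s : Set X) (hs : Dense s) : X →ₗᵢ[ℝ] lp (fun _ : s => ℝ) ∞ := by
  have hdual : ∀ d : s, ∃ f : X →L[ℝ] ℝ, ‖f‖ ≤ 1 ∧ f d = ‖(d : X)‖ := fun d =>
    exists_dual_vector'' ℝ (d : X)
  choose f hf1 hf2 using hdual
  have hmem : ∀ x : X, Memℓp (fun d : s => f d x) ∞ := by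
    intro x
    refine memℓp_infty ⟨‖x‖, ?_⟩
    rintro r ⟨d, rfl⟩
    calc ‖f d x‖ ≤ ‖f d‖ * ‖x‖ := (f d).le_opNorm x
      _ ≤ 1 * ‖x‖ := mul_le_mul_of_nonneg_right (hf1 d) (norm_nonneg x)
      _ = ‖x‖ := one_mul _
  refine
    { toFun := fun x => ⟨fun d => f d x, hmem x⟩
      map_add' := fun x y => Subtype.ext (funext fun d => map_add (f d) x y)
      map_smul' := fun c x => Subtype.ext (funext fun d => map_smul (f d) c x)
      norm_map' := ?_ }
  intro x
  apply le_antisymm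
  · refine lp.norm_le_of_forall_le (norm_nonneg x) fun d => ?_
    calc ‖f d x‖ ≤ ‖f d‖ * ‖x‖ := (f d).le_opNorm x
      _ ≤ 1 * ‖x‖ := mul_le_mul_of_nonneg_right (hf1 d) (norm_nonneg x)
      _ = ‖x‖ := one_mul _
  · refine le_of_forall_pos_le_add fun ε hε => ?_
    obtain ⟨y, hy, hxy⟩ := hs.exists_dist_lt x (half_pos hε)
    set d : s := ⟨y, hy⟩
    have h1 : ‖f d x‖ ≤ ‖(⟨fun d => f d x, hmem x⟩ : lp (fun _ : s => ℝ) ∞)‖ :=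
      lp.norm_apply_le_norm (E := fun _ : s => ℝ) ENNReal.top_ne_zero
        (⟨fun d => f d x, hmem x⟩ : lp (fun _ : s => ℝ) ∞) d
    have h2 : ‖(y : X)‖ - ‖y - x‖ ≤ ‖f d x‖ := by
      have : f d x = f d y - f d (y - x) := by rw [map_sub]; ring
      rw [this]
      calc ‖(y : X)‖ - ‖y - x‖ ≤ ‖f d y‖ - ‖f d (y - x)‖ := by
            have hy1 : ‖f d y‖ = ‖(y : X)‖ := by
              rw [hf2 d]; exact Real.norm_of_nonneg (norm_nonneg _)
            have hy2 : ‖f d (y - x)‖ ≤ ‖y - x‖ := by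
              calc ‖f d (y - x)‖ ≤ ‖f d‖ * ‖y - x‖ := (f d).le_opNorm _
                _ ≤ 1 * ‖y - x‖ := mul_le_mul_of_nonneg_right (hf1 d) (norm_nonneg _)
                _ = ‖y - x‖ := one_mul _
            linarith
        _ ≤ ‖f d y - f d (y - x)‖ := norm_sub_norm_le _ _
    have h3 : ‖x‖ ≤ ‖(y : X)‖ + ‖y - x‖ := by
      calc ‖x‖ = ‖y - (y - x)‖ := by rw [sub_sub_cancel]
        _ ≤ ‖(y : X)‖ + ‖y - x‖ := norm_sub_le _ _
    have h4 : ‖y - x‖ < ε / 2 := by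
      rw [← dist_eq_norm, dist_comm]; exact hxy
    calc ‖x‖ ≤ ‖(y : X)‖ + ‖y - x‖ := h3
      _ ≤ (‖f d x‖ + ‖y - x‖) + ‖y - x‖ := by linarith
      _ ≤ ‖(⟨fun d => f d x, hmem x⟩ : lp (fun _ : s => ℝ) ∞)‖ + ε := by linarith

/-- Cardinality bound for `ℓ∞(ι)`. -/
theorem mk_lpInfty_le {ι : Type u} (ℵ : Cardinal.{u}) (hℵ : Cardinal.aleph0 ≤ ℵ)
    (hι : Cardinal.mk ι ≤ ℵ) : Cardinal.mk (lp (fun _ : ι => ℝ) ∞) ≤ 2 ^ ℵ := by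
  have h1 : Cardinal.mk (lp (fun _ : ι => ℝ) ∞) ≤ Cardinal.mk (ι → ℝ) :=
    Cardinal.mk_le_of_injective (f := fun x : lp (fun _ : ι => ℝ) ∞ => (x : ι → ℝ))
      Subtype.coe_injective
  have h2 : Cardinal.mk (ι → ℝ) = Cardinal.continuum.{u} ^ Cardinal.mk ι := by
    rw [Cardinal.mk_arrow, Cardinal.mk_real, Cardinal.lift_continuum, Cardinal.lift_uzero]
  have h3 : Cardinal.continuum.{u} ^ Cardinal.mk ι = 2 ^ (Cardinal.aleph0 * Cardinal.mk ι) := by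
    rw [Cardinal.power_mul, Cardinal.two_power_aleph0]
  have h4 : Cardinal.aleph0 * Cardinal.mk ι ≤ ℵ := by
    calc Cardinal.aleph0 * Cardinal.mk ι ≤ ℵ * ℵ := mul_le_mul' hℵ hι
      _ = ℵ := Cardinal.mul_eq_self hℵ
  calc Cardinal.mk (lp (fun _ : ι => ℝ) ∞) ≤ 2 ^ (Cardinal.aleph0 * Cardinal.mk ι) := by
        rw [← h3, ← h2]; exact h1
    _ ≤ 2 ^ ℵ :=
        Cardinal.power_le_power_left (by norm_num : (2 : Cardinal.{u}) ≠ 0) h4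

set_option synthInstance.maxHeartbeats 1000000 in
set_option maxHeartbeats 2000000 in
/-- For an infinite cardinal `ℵ`, a Banach space `E` is universally `(1, ℵ)`-injective iff
the extension property holds for all superspaces `B` of density character at most `2 ^ ℵ`. -/
theorem universallyInjective1_iff_densityLE_two_pow
    (ℵ : Cardinal.{u}) (hℵ : Cardinal.aleph0 ≤ ℵ) (E : BanachSpace.{u}) :
    (∀ B : BanachSpace.{u}, ∀ A : Submodule ℝ B.carrier, IsClosed (A : Set B.carrier) →
        DensityLT A ℵ → ∀ t : A →L[ℝ] E.carrier, ∃ T : B.carrier →L[ℝ] E.carrier,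
          (∀ a : A, T (a : B.carrier) = t a) ∧ ‖T‖ ≤ ‖t‖) ↔
    (∀ B : BanachSpace.{u}, DensityLE B.carrier (2 ^ ℵ) →
        ∀ A : Submodule ℝ B.carrier, IsClosed (A : Set B.carrier) →
        DensityLT A ℵ → ∀ t : A →L[ℝ] E.carrier, ∃ T : B.carrier →L[ℝ] E.carrier,
          (∀ a : A, T (a : B.carrier) = t a) ∧ ‖T‖ ≤ ‖t‖) := by
  constructor
  · intro h B _ A hA hdens t
    exact h B A hA hdens t
  · intro h B A hA hdensA t
    obtain ⟨s, hs, hslt⟩ := hdensA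
    haveI : CompleteSpace A := hA.completeSpace_coe
    -- the isometric embedding of A into ℓ∞(s)
    let W : Type u := lp (fun _ : s => ℝ) ∞
    let j : A →ₗᵢ[ℝ] W := isometryIntoLpInfty s hs
    -- the bundled Banach space W
    let BW : BanachSpace.{u} := ⟨W⟩
    have hWdens : DensityLE W (2 ^ ℵ) := by
      refine ⟨Set.univ, dense_univ, ?_⟩
      rw [Cardinal.mk_univ]
      exact mk_lpInfty_le ℵ hℵ hslt.le
    -- the range of j, as a closed submodule of W
    let A' : Submodule ℝ W := LinearMap.range j.toLinearMap
    have hA'closed : IsClosed (A' : Set W) := by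
      have hcl : IsClosed (Set.range j) := j.isometry.isClosedEmbedding.isClosed_range
      simpa [A', LinearMap.coe_range] using hcl
    let e : A ≃ₗᵢ[ℝ] A' := j.equivRange
    have hA'dens : DensityLT A' ℵ := by
      refine ⟨⇑e '' s, ?_, lt_of_le_of_lt (Cardinal.mk_image_le) hslt⟩
      show Dense (⇑e.toHomeomorph '' s)
      rw [dense_iff_closure_eq, ← e.toHomeomorph.image_closure, hs.closure_eq,
        Set.image_univ]
      exact e.toHomeomorph.surjective.range_eq
    -- the operator from A' to E
    let t' : A' →L[ℝ] E.carrier := t.comp e.symm.toLinearIsometry.toContinuousLinearMap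
    obtain ⟨T', hT'ext, hT'norm⟩ := h BW hWdens A' hA'closed hA'dens t'
    -- extend the embedding j to all of B
    obtain ⟨G, hGext, hGnorm⟩ := lpInfty_injective A j.toContinuousLinearMap
    refine ⟨T'.comp G, ?_, ?_⟩
    · intro a
      have h1 : G a = j a := hGext a
      have h2 : (j a : W) = ((e a : A') : W) := (j.equivRange_apply_coe a).symm
      have h3 : T' ((e a : A') : W) = t' (e a) := hT'ext (e a)
      have h4 : t' (e a) = t a := by
        simp [t', LinearIsometryEquiv.symm_apply_apply]
      calc T'.comp G a = T' (G a) := rfl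
        _ = T' (j a) := by rw [h1]
        _ = T' ((e a : A') : W) := by rw [h2]
        _ = t' (e a) := h3
        _ = t a := h4
    · have hnt' : ‖t'‖ ≤ ‖t‖ := by
        calc ‖t'‖ ≤ ‖t‖ * ‖e.symm.toLinearIsometry.toContinuousLinearMap‖ :=
              ContinuousLinearMap.opNorm_comp_le _ _
          _ ≤ ‖t‖ * 1 := mul_le_mul_of_nonneg_left
              (e.symm.toLinearIsometry.norm_toContinuousLinearMap_le) (norm_nonneg t)
          _ = ‖t‖ := mul_one _
      have hnG : ‖G‖ ≤ 1 :=
        hGnorm.trans j.norm_toContinuousLinearMap_le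
      calc ‖T'.comp G‖ ≤ ‖T'‖ * ‖G‖ := ContinuousLinearMap.opNorm_comp_le _ _
        _ ≤ ‖t'‖ * 1 := mul_le_mul hT'norm hnG (norm_nonneg G) (norm_nonneg t')
        _ = ‖t'‖ := mul_one _
        _ ≤ ‖t‖ := hnt'
end
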